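/- arXiv:2205.01651 — 8 statements merged into one kernel-verified Lean document; each statement's English description precedes it below -/
import Mathlib

section
/- The query ◇ᵣ(A ∧ B) is not uniquely characterisable within the class of path queries built from atoms, ∧, and ◇ᵣ: for any finite sets E⁺, E⁻ of data instances such that ◇ᵣ(A ∧ B) holds at position 0 of every member of E⁺ and fails at position 0 of every member of E⁻, there exists a query q' built from atoms, ∧, ◇ᵣ (specifically some iterated query q'ₙ = ◇ᵣ(A ∧ ◇ᵣ(B ∧ ◇ᵣ(A ∧ …)))) that fits (E⁺,E⁻) but is not equivalent to ◇ᵣ(A ∧ B). -/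
inductive LTL (σ : Type) : Type where
  | atom : σ → LTL σ
  | top : LTL σ
  | bot : LTL σ
  | and : LTL σ → LTL σ → LTL σ
  | next : LTL σ → LTL σ
  | ev : LTL σ → LTL σ
  | evr : LTL σ → LTL σ
  | untl : LTL σ → LTL σ → LTL σ

/-- Satisfaction of an LTL query at position `ℓ` in a data instance `D`
(a finite word over `2^σ`, implicitly extended by `∅`). -/
def sat {σ : Type} (D : List (Finset σ)) : LTL σ → ℕ → Prop
  | .atom a, ℓ => a ∈ D.getD ℓ ∅
  | .top, _ => True
  | .bot, _ => False
  | .and p q, ℓ => sat D p ℓ ∧ sat D q ℓ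
  | .next p, ℓ => sat D p (ℓ + 1)
  | .ev p, ℓ => ∃ m, ℓ < m ∧ sat D p m
  | .evr p, ℓ => ∃ m, ℓ ≤ m ∧ sat D p m
  | .untl p q, ℓ => ∃ m, ℓ < m ∧ sat D q m ∧ ∀ k, ℓ < k → k < m → sat D p k

def equivQ {σ : Type} (p q : LTL σ) : Prop :=
  ∀ (D : List (Finset σ)) (ℓ : ℕ), sat D p ℓ ↔ sat D q ℓ

def entailsQ {σ : Type} (p q : LTL σ) : Prop :=
  ∀ (D : List (Finset σ)) (ℓ : ℕ), sat D p ℓ → sat D q ℓ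

/-- The conjunction of the atoms in `ρ`. -/
noncomputable def conjF {σ : Type} (ρ : Finset σ) : LTL σ :=
  ρ.toList.foldr (fun a r => (LTL.atom a).and r) LTL.top

/-- Queries over `σ = {A, B}` (encoded as `Fin 2`, `A = 0`, `B = 1`)
built from atoms, `∧` and `◇ᵣ`. -/
inductive EvrQ : LTL (Fin 2) → Prop
  | atom (a : Fin 2) : EvrQ (.atom a)
  | and {p q : LTL (Fin 2)} : EvrQ p → EvrQ q → EvrQ (p.and q)
  | evr {p : LTL (Fin 2)} : EvrQ p → EvrQ (.evr p)

/-- The query `◇ᵣ(A ∧ B)`. -/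
def qAB : LTL (Fin 2) := .evr ((LTL.atom 0).and (.atom 1))

/-- `qIter 0 = q₁ = ◇ᵣ(A ∧ ◇ᵣB)`, `qIter (i+1) = ◇ᵣ(A ∧ ◇ᵣ(B ∧ ◇ᵣ (qIter i)))`. -/
def qIter : ℕ → LTL (Fin 2)
  | 0 => .evr ((LTL.atom 0).and (.evr (.atom 1)))
  | n + 1 => .evr ((LTL.atom 0).and (.evr ((LTL.atom 1).and (.evr (qIter n)))))

lemma evrQ_qIter : ∀ n, EvrQ (qIter n) := by
  intro n
  induction n with
  | zero => exact .evr (.and (.atom 0) (.evr (.atom 1)))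
  | succ n ih => exact .evr (.and (.atom 0) (.evr (.and (.atom 1) (.evr ih))))

lemma qAB_entails_qIter : ∀ (n : ℕ) (D : List (Finset (Fin 2))) (ℓ : ℕ),
    sat D qAB ℓ → sat D (qIter n) ℓ := by
  intro n
  induction n with
  | zero =>
    rintro D ℓ ⟨m, hm, hA, hB⟩
    exact ⟨m, hm, hA, m, le_refl m, hB⟩
  | succ n ih =>
    rintro D ℓ ⟨m, hm, hA, hB⟩
    exact ⟨m, hm, hA, m, le_refl m, hB, m, le_refl m,
      ih D m ⟨m, le_refl m, hA, hB⟩⟩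

lemma qIter_B {D : List (Finset (Fin 2))}
    (hAB : ∀ m, ¬ ((0 : Fin 2) ∈ D.getD m ∅ ∧ (1 : Fin 2) ∈ D.getD m ∅)) :
    ∀ n ℓ, sat D (qIter n) ℓ → ∃ m, ℓ + n + 1 ≤ m ∧ (1 : Fin 2) ∈ D.getD m ∅ := by
  intro n
  induction n with
  | zero =>
    rintro ℓ ⟨m, hm, hA, m', hmm', hB⟩
    have hne : m ≠ m' := fun h => hAB m ⟨hA, h ▸ hB⟩
    exact ⟨m', by omega, hB⟩
  | succ n ih =>
    rintro ℓ ⟨m, hm, hA, m', hmm', hB, m'', hm'', hq⟩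
    have hne : m ≠ m' := fun h => hAB m ⟨hA, h ▸ hB⟩
    obtain ⟨k, hk, hBk⟩ := ih m'' hq
    exact ⟨k, by omega, hBk⟩

/-- alternating word ({0}{1})^(n+1) -/
def altD : ℕ → List (Finset (Fin 2))
  | 0 => [{0}, {1}]
  | n + 1 => {0} :: {1} :: altD n

lemma sat_cons {σ : Type} (x : Finset σ) (D : List (Finset σ)) :
    ∀ (p : LTL σ) (ℓ : ℕ), sat (x :: D) p (ℓ + 1) ↔ sat D p ℓ := by
  intro p
  induction p with
  | atom a => intro ℓ; simp [sat]
  | top => intro ℓ; simp [sat]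
  | bot => intro ℓ; simp [sat]
  | and p q ihp ihq => intro ℓ; exact and_congr (ihp ℓ) (ihq ℓ)
  | next p ihp => intro ℓ; exact ihp (ℓ + 1)
  | ev p ihp =>
    intro ℓ
    constructor
    · rintro ⟨m, hm, hs⟩
      obtain ⟨k, rfl⟩ : ∃ k, m = k + 1 := ⟨m - 1, by omega⟩
      exact ⟨k, by omega, (ihp k).mp hs⟩
    · rintro ⟨m, hm, hs⟩
      exact ⟨m + 1, by omega, (ihp m).mpr hs⟩
  | evr p ihp =>
    intro ℓ
    constructor
    · rintro ⟨m, hm, hs⟩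
      obtain ⟨k, rfl⟩ : ∃ k, m = k + 1 := ⟨m - 1, by omega⟩
      exact ⟨k, by omega, (ihp k).mp hs⟩
    · rintro ⟨m, hm, hs⟩
      exact ⟨m + 1, by omega, (ihp m).mpr hs⟩
  | untl p q ihp ihq =>
    intro ℓ
    constructor
    · rintro ⟨m, hm, hs, hall⟩
      obtain ⟨k, rfl⟩ : ∃ k, m = k + 1 := ⟨m - 1, by omega⟩
      refine ⟨k, by omega, (ihq k).mp hs, fun j hj1 hj2 => ?_⟩
      exact (ihp j).mp (hall (j + 1) (by omega) (by omega))
    · rintro ⟨m, hm, hs, hall⟩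
      refine ⟨m + 1, by omega, (ihq m).mpr hs, fun j hj1 hj2 => ?_⟩
      obtain ⟨i, rfl⟩ : ∃ i, j = i + 1 := ⟨j - 1, by omega⟩
      exact (ihp i).mpr (hall i (by omega) (by omega))

lemma sat_altD : ∀ n, sat (altD n) (qIter n) 0 := by
  intro n
  induction n with
  | zero =>
    refine ⟨0, le_refl 0, ?_, 1, by omega, ?_⟩
    · show (0 : Fin 2) ∈ (altD 0).getD 0 ∅; decide
    · show (1 : Fin 2) ∈ (altD 0).getD 1 ∅; decide
  | succ n ih =>
    refine ⟨0, le_refl 0, ?_, 1, by omega, ?_, 2, by omega, ?_⟩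
    · show (0 : Fin 2) ∈ ({0} :: {1} :: altD n).getD 0 ∅; simp [List.getD]
    · show (1 : Fin 2) ∈ ({0} :: {1} :: altD n).getD 1 ∅; simp [List.getD]
    · show sat ({0} :: {1} :: altD n) (qIter n) (1 + 1)
      rw [sat_cons]
      exact (sat_cons _ _ _ 0).mpr ih

lemma altD_getD : ∀ n m, (altD n).getD m ∅ = {0} ∨ (altD n).getD m ∅ = {1} ∨
    (altD n).getD m ∅ = ∅ := by
  intro n
  induction n with
  | zero =>
    intro m
    match m with
    | 0 => left; rfl
    | 1 => right; left; rfl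
    | m + 2 => right; right; simp [altD, List.getD]
  | succ n ih =>
    intro m
    match m with
    | 0 => left; rfl
    | 1 => right; left; rfl
    | m + 2 => exact ih m

lemma altD_no_AB : ∀ n m, ¬ ((0 : Fin 2) ∈ (altD n).getD m ∅ ∧
    (1 : Fin 2) ∈ (altD n).getD m ∅) := by
  intro n m h
  rcases altD_getD n m with he | he | he <;> rw [he] at h <;> revert h <;> decide

/-- `◇ᵣ(A ∧ B)` is not uniquely characterisable within `Q_p[◇ᵣ]`: whenever
`◇ᵣ(A ∧ B)` fits a finite example set `(E⁺, E⁻)`, some iterated query `qIter n`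
(built from atoms, `∧`, `◇ᵣ`) also fits it but is not equivalent to `◇ᵣ(A ∧ B)`. -/
theorem evr_AB_not_uniquely_characterisable
    (Ep En : Finset (List (Finset (Fin 2))))
    (hp : ∀ D ∈ Ep, sat D qAB 0) (hn : ∀ D ∈ En, ¬ sat D qAB 0) :
    ∃ n : ℕ, EvrQ (qIter n) ∧
      (∀ D ∈ Ep, sat D (qIter n) 0) ∧
      (∀ D ∈ En, ¬ sat D (qIter n) 0) ∧
      ¬ equivQ (qIter n) qAB := by
  set N := En.sup List.length with hN
  refine ⟨N, evrQ_qIter N, fun D hD => qAB_entails_qIter N D 0 (hp D hD), ?_, ?_⟩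
  · intro D hD hsat
    have hAB : ∀ m, ¬ ((0 : Fin 2) ∈ D.getD m ∅ ∧ (1 : Fin 2) ∈ D.getD m ∅) := by
      intro m hm
      exact hn D hD ⟨m, Nat.zero_le m, hm.1, hm.2⟩
    obtain ⟨m, hm, hB⟩ := qIter_B hAB N 0 hsat
    have hlen : D.length ≤ N := Finset.le_sup hD
    have : D.getD m ∅ = ∅ := List.getD_eq_default _ _ (by omega)
    rw [this] at hB
    exact absurd hB (by simp)
  · intro h
    have := (h (altD N) 0).mp (sat_altD N)
    obtain ⟨m, _, hA, hB⟩ := this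
    exact altD_no_AB N m ⟨hA, hB⟩
end

section
/- The example set E = (E⁺, E⁻) with E⁺ = {({A,B}), (∅,{A,B})} and E⁻ = {({A},{B},{A},{B},…,{A},{B}) with n alternations} uniquely characterises ◇ᵣ(A ∧ B) within the class of path queries over {○, ◇ᵣ} of size at most n: every path query q' of the form ρ₀ ∧ o₁(ρ₁ ∧ o₂(ρ₂ ∧ … ∧ oₘ ρₘ)) with oᵢ ∈ {○,◇ᵣ}, each ρᵢ a conjunction of atoms over {A,B}, and m < n, that fits E, is equivalent to ◇ᵣ(A ∧ B). -/
/-- Path queries over `{○, ◇ᵣ}`: `ρ₀ ∧ o₁(ρ₁ ∧ o₂(ρ₂ ∧ … ∧ oₘ ρₘ))`, where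
`true` codes `○` and `false` codes `◇ᵣ`. -/
noncomputable def pathQ {σ : Type} (ρ : Finset σ) : List (Bool × Finset σ) → LTL σ
  | [] => conjF ρ
  | (o, ρ') :: rest =>
      (conjF ρ).and (if o then LTL.next (pathQ ρ' rest) else LTL.evr (pathQ ρ' rest))

/-- The negative example `({A},{B},…,{A},{B})` with `n` alternations. -/
def altAB (n : ℕ) : List (Finset (Fin 2)) :=
  (List.replicate n [({0} : Finset (Fin 2)), ({1} : Finset (Fin 2))]).flatten

/-!
Fitting `[{A,B}]` at `0` forces the shape of the query: it can stay at position `0` only through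
an initial run of `◇ᵣ`-steps, and once it moves past the one letter every remaining conjunction
must be empty. Fitting `[∅, {A,B}]` forces `ρ₀ = ∅`. If no conjunction were `{A,B}`, each one of
the `◇ᵣ`-run would be contained in `{A}` or in `{B}`, hence met within one step on the alternating
word, and since the run is shorter than that word the query would hold on the negative example.
So some conjunction is `{A,B}`, which gives `q' ⊨ ◇ᵣ(A ∧ B)`; conversely, from a position
carrying `{A,B}` the whole `◇ᵣ`-run can jump there and the empty tail holds anywhere.
-/

inductive EvrRunThenTrivial {σ : Type} : List (Bool × Finset σ) → Prop
  | trivial {L} : (∀ p ∈ L, p.2 = ∅) → EvrRunThenTrivial L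
  | evr {ρ L} : EvrRunThenTrivial L → EvrRunThenTrivial ((false, ρ) :: L)

section PathQuery

variable {σ : Type} {D : List (Finset σ)} {ρ ρ' : Finset σ} {L R : List (Bool × Finset σ)} {ℓ : ℕ}

theorem sat_conjF : sat D (conjF ρ) ℓ ↔ ρ ⊆ D.getD ℓ ∅ := by
  suffices ∀ l : List σ, sat D (l.foldr (fun a r => (LTL.atom a).and r) LTL.top) ℓ ↔
      ∀ a ∈ l, a ∈ D.getD ℓ ∅ by
    simpa [conjF, Finset.subset_iff] using this ρ.toList
  intro l
  induction l with
  | nil => simp [sat]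
  | cons a l ih => simp [sat, ih]

@[simp]
theorem sat_pathQ_nil : sat D (pathQ ρ []) ℓ ↔ ρ ⊆ D.getD ℓ ∅ :=
  sat_conjF

@[simp]
theorem sat_pathQ_cons_next :
    sat D (pathQ ρ ((true, ρ') :: R)) ℓ ↔ ρ ⊆ D.getD ℓ ∅ ∧ sat D (pathQ ρ' R) (ℓ + 1) := by
  simp [pathQ, sat, sat_conjF]

@[simp]
theorem sat_pathQ_cons_evr :
    sat D (pathQ ρ ((false, ρ') :: R)) ℓ ↔
      ρ ⊆ D.getD ℓ ∅ ∧ ∃ m, ℓ ≤ m ∧ sat D (pathQ ρ' R) m := by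
  simp [pathQ, sat, sat_conjF]

theorem subset_getD_of_sat_pathQ (h : sat D (pathQ ρ L) ℓ) : ρ ⊆ D.getD ℓ ∅ := by
  rcases L with _ | ⟨⟨_ | _, ρ'⟩, R⟩
  exacts [sat_pathQ_nil.1 h, (sat_pathQ_cons_evr.1 h).1, (sat_pathQ_cons_next.1 h).1]

theorem exists_subset_getD_of_sat_pathQ (h : sat D (pathQ ρ L) ℓ) :
    ∀ p ∈ L, ∃ m, ℓ ≤ m ∧ p.2 ⊆ D.getD m ∅ := by
  induction L generalizing ρ ℓ with
  | nil => simp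
  | cons q R ih =>
    obtain ⟨ℓ', hℓ', h'⟩ : ∃ ℓ', ℓ ≤ ℓ' ∧ sat D (pathQ q.2 R) ℓ' := by
      obtain ⟨_ | _, ρ'⟩ := q
      exacts [(sat_pathQ_cons_evr.1 h).2, ⟨ℓ + 1, ℓ.le_succ, (sat_pathQ_cons_next.1 h).2⟩]
    rintro p (_ | ⟨_, hp⟩)
    · exact ⟨ℓ', hℓ', subset_getD_of_sat_pathQ h'⟩
    · obtain ⟨m, hm, hsub⟩ := ih h' p hp
      exact ⟨m, hℓ'.trans hm, hsub⟩

theorem sat_pathQ_of_forall_eq_empty (hρ : ρ ⊆ D.getD ℓ ∅) (hL : ∀ p ∈ L, p.2 = ∅) :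
    sat D (pathQ ρ L) ℓ := by
  induction L generalizing ρ ℓ with
  | nil => exact sat_pathQ_nil.2 hρ
  | cons q R ih =>
    obtain ⟨hq, hR⟩ := List.forall_mem_cons.1 hL
    obtain ⟨_ | _, ρ'⟩ := q
    · exact sat_pathQ_cons_evr.2 ⟨hρ, ℓ, le_rfl, ih ((Finset.subset_empty.2 hq).trans (Finset.empty_subset _)) hR⟩
    · exact sat_pathQ_cons_next.2 ⟨hρ, ih ((Finset.subset_empty.2 hq).trans (Finset.empty_subset _)) hR⟩

theorem eq_empty_of_sat_pathQ_of_length_le (hℓ : D.length ≤ ℓ) (h : sat D (pathQ ρ L) ℓ) :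
    ρ = ∅ ∧ ∀ p ∈ L, p.2 = ∅ := by
  have hD : ∀ m, ℓ ≤ m → D.getD m ∅ = ∅ := fun m hm => List.getD_eq_default _ _ (by omega)
  refine ⟨Finset.subset_empty.1 (hD ℓ le_rfl ▸ subset_getD_of_sat_pathQ h), fun p hp => ?_⟩
  obtain ⟨m, hm, hsub⟩ := exists_subset_getD_of_sat_pathQ h p hp
  exact Finset.subset_empty.1 (hD m hm ▸ hsub)

theorem evrRunThenTrivial_of_sat_singleton {s : Finset σ} (h : sat [s] (pathQ ρ L) 0) :
    EvrRunThenTrivial L := by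
  induction L generalizing ρ with
  | nil => exact .trivial (by simp)
  | cons q R ih =>
    obtain ⟨_ | _, ρ'⟩ := q
    · obtain ⟨-, m, -, hm⟩ := sat_pathQ_cons_evr.1 h
      rcases Nat.eq_zero_or_pos m with rfl | hpos
      · exact .evr (ih hm)
      · exact .trivial (List.forall_mem_cons.2 (eq_empty_of_sat_pathQ_of_length_le hpos hm))
    · exact .trivial (List.forall_mem_cons.2
        (eq_empty_of_sat_pathQ_of_length_le le_rfl (sat_pathQ_cons_next.1 h).2))

theorem sat_pathQ_of_evrRunThenTrivial {m : ℕ} (hL : EvrRunThenTrivial L)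
    (hm : ∀ p ∈ L, p.2 ⊆ D.getD m ∅) (hℓ : ℓ ≤ m) (hρ : ρ ⊆ D.getD ℓ ∅) :
    sat D (pathQ ρ L) ℓ := by
  induction hL generalizing ρ ℓ with
  | trivial hL => exact sat_pathQ_of_forall_eq_empty hρ hL
  | evr _ ih =>
    obtain ⟨hρ', hm⟩ := List.forall_mem_cons.1 hm
    exact sat_pathQ_cons_evr.2 ⟨hρ, m, hℓ, ih hm le_rfl hρ'⟩

end PathQuery

theorem altAB_succ (n : ℕ) : altAB (n + 1) = {0} :: {1} :: altAB n := by
  simp [altAB, List.replicate_succ]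

theorem altAB_getD {n j : ℕ} (hj : j < 2 * n) : (altAB n).getD j ∅ = {Fin.ofNat 2 j} := by
  induction n generalizing j with
  | zero => omega
  | succ n ih =>
    rw [altAB_succ]
    match j with
    | 0 => rfl
    | 1 => rfl
    | j + 2 =>
      rw [List.getD_cons_succ, List.getD_cons_succ, ih (by omega)]
      congr 1
      ext
      simp only [Fin.val_ofNat]
      omega

theorem exists_subset_altAB_getD {n c : ℕ} {s : Finset (Fin 2)} (hs : s ≠ {0, 1})
    (hc : c + 1 < 2 * n) : ∃ c', c ≤ c' ∧ c' ≤ c + 1 ∧ s ⊆ (altAB n).getD c' ∅ := by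
  obtain ⟨a, ha⟩ : ∃ a : Fin 2, s ⊆ {a} := by
    revert s
    decide
  obtain rfl | rfl : a = Fin.ofNat 2 c ∨ a = Fin.ofNat 2 (c + 1) := by
    simp only [Fin.ext_iff, Fin.val_ofNat]
    omega
  · exact ⟨c, le_rfl, c.le_succ, by rwa [altAB_getD (by omega)]⟩
  · exact ⟨c + 1, c.le_succ, le_rfl, by rwa [altAB_getD hc]⟩

theorem sat_altAB_of_evrRunThenTrivial {n c : ℕ} {ρ : Finset (Fin 2)}
    {L : List (Bool × Finset (Fin 2))} (hL : EvrRunThenTrivial L)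
    (hAB : ∀ p ∈ L, p.2 ≠ {0, 1}) (hρ : ρ ⊆ (altAB n).getD c ∅) (hc : c + L.length < 2 * n) :
    sat (altAB n) (pathQ ρ L) c := by
  induction hL generalizing ρ c with
  | trivial hL => exact sat_pathQ_of_forall_eq_empty hρ hL
  | evr _ ih =>
    obtain ⟨hρ', hAB⟩ := List.forall_mem_cons.1 hAB
    rw [List.length_cons] at hc
    obtain ⟨c', hcc', hc', hsub⟩ := exists_subset_altAB_getD (n := n) (c := c) hρ' (by omega)
    exact sat_pathQ_cons_evr.2 ⟨hρ, c', hcc', ih hAB hsub (by omega)⟩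

/-- The example set `E⁺ = {({A,B}), (∅,{A,B})}`,
`E⁻ = {({A},{B},…,{A},{B})}` (with `n` alternations) uniquely characterises
`◇ᵣ(A ∧ B)` within the path queries over `{○, ◇ᵣ}` of size `m < n`. -/
theorem evr_AB_uniquely_characterised_bounded
    (n : ℕ) (ρ₀ : Finset (Fin 2)) (L : List (Bool × Finset (Fin 2)))
    (hsize : L.length < n)
    (h1 : sat [({0, 1} : Finset (Fin 2))] (pathQ ρ₀ L) 0)
    (h2 : sat [(∅ : Finset (Fin 2)), ({0, 1} : Finset (Fin 2))] (pathQ ρ₀ L) 0)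
    (h3 : ¬ sat (altAB n) (pathQ ρ₀ L) 0) :
    equivQ (pathQ ρ₀ L) qAB := by
  obtain rfl : ρ₀ = ∅ := Finset.subset_empty.1 (subset_getD_of_sat_pathQ h2)
  have hshape := evrRunThenTrivial_of_sat_singleton h1
  obtain ⟨p, hp, hpAB⟩ : ∃ p ∈ L, p.2 = {0, 1} := by
    by_contra! hAB
    exact h3 (sat_altAB_of_evrRunThenTrivial hshape hAB (Finset.empty_subset _) (by omega))
  intro D ℓ
  constructor
  · intro h
    obtain ⟨m, hm, hsub⟩ := exists_subset_getD_of_sat_pathQ h p hp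
    rw [hpAB, Finset.insert_subset_iff, Finset.singleton_subset_iff] at hsub
    exact ⟨m, hm, hsub⟩
  · rintro ⟨m, hm, hA, hB⟩
    refine sat_pathQ_of_evrRunThenTrivial hshape (fun _ _ a _ => ?_) hm (Finset.empty_subset _)
    fin_cases a
    exacts [hA, hB]
end

section
/- The query ⊥ U A (equivalently ○A) is not uniquely characterisable within the class of U-queries over the single-atom signature {A}: for any example set (E⁺,E⁻) that ⊥ U A fits, letting n be the maximal length of instances in E⁻, the query (○ⁿ⁺¹A) U A also fits (E⁺,E⁻) but is not equivalent to ⊥ U A. -/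
/-- `n`-fold iteration of the next operator `○`. -/
def nextPow {σ : Type} : ℕ → LTL σ → LTL σ
  | 0, q => q
  | n + 1, q => LTL.next (nextPow n q)

lemma sat_nextPow {σ : Type} (D : List (Finset σ)) (p : LTL σ) :
    ∀ j ℓ, sat D (nextPow j p) ℓ ↔ sat D p (ℓ + j)
  | 0, ℓ => by simp [nextPow]
  | j + 1, ℓ => by
    show sat D (nextPow j p) (ℓ + 1) ↔ _
    rw [sat_nextPow D p j (ℓ + 1), show ℓ + 1 + j = ℓ + (j + 1) from by omega]

lemma sat_botU {σ : Type} (a : σ) (D : List (Finset σ)) (ℓ : ℕ) :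
    sat D ((LTL.bot).untl (.atom a)) ℓ ↔ a ∈ D.getD (ℓ + 1) ∅ := by
  constructor
  · rintro ⟨m, hm, hA, hk⟩
    rcases Nat.lt_or_ge (ℓ + 1) m with h | h
    · exact (hk (ℓ + 1) (by omega) h).elim
    · have : m = ℓ + 1 := by omega
      subst this; exact hA
  · intro h
    exact ⟨ℓ + 1, by omega, h, fun k h1 h2 => by omega⟩

lemma getD_ofFn {σ : Type} {m : ℕ} (f : Fin m → Finset σ) (i : ℕ) (h : i < m) :
    (List.ofFn f).getD i ∅ = f ⟨i, h⟩ := by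
  rw [List.getD_eq_getElem _ _ (by simpa using h)]
  simp

/-- `⊥ U A` (i.e. `○A`) is not uniquely characterisable within `U`-queries over
the single-atom signature `{A}` (encoded as `Fin 1`): if it fits `(E⁺, E⁻)` and
`n` bounds the lengths of the instances in `E⁻` (list length `≤ n + 1`, i.e.
length as data instance `≤ n`), then `(○^{n+1}A) U A` also fits `(E⁺, E⁻)` but
is not equivalent to `⊥ U A`. -/
theorem bot_until_A_not_uniquely_characterisable
    (Ep En : Finset (List (Finset (Fin 1))))
    (hp : ∀ D ∈ Ep, sat D ((LTL.bot).untl (.atom 0)) 0)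
    (hn : ∀ D ∈ En, ¬ sat D ((LTL.bot).untl (.atom 0)) 0)
    (n : ℕ) (hlen : ∀ D ∈ En, D.length ≤ n + 1) :
    (∀ D ∈ Ep, sat D ((nextPow (n + 1) (LTL.atom 0)).untl (.atom 0)) 0) ∧
    (∀ D ∈ En, ¬ sat D ((nextPow (n + 1) (LTL.atom 0)).untl (.atom 0)) 0) ∧
    ¬ equivQ ((nextPow (n + 1) (LTL.atom 0)).untl (.atom 0)) ((LTL.bot).untl (.atom 0)) := by
  refine ⟨?_, ?_, ?_⟩
  · intro D hD
    have h := (sat_botU 0 D 0).mp (hp D hD)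
    exact ⟨1, by omega, h, fun k h1 h2 => by omega⟩
  · rintro D hD ⟨m, hm, hA, hk⟩
    have h1 : (0 : Fin 1) ∉ D.getD 1 ∅ := fun h => hn D hD ((sat_botU 0 D 0).mpr h)
    rcases Nat.lt_or_ge 1 m with h | h
    · have h2 : (0 : Fin 1) ∈ D.getD (1 + (n + 1)) ∅ :=
        (sat_nextPow D (.atom 0) (n + 1) 1).mp (hk 1 (by omega) h)
      rw [List.getD_eq_default _ _ (by have := hlen D hD; omega)] at h2
      simp at h2
    · have : m = 1 := by omega
      subst this; exact h1 hA
  · intro hEq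
    set D : List (Finset ℕ) :=
      List.ofFn (fun i : Fin (2 * n + 3) => if (i : ℕ) < n + 2 then ∅ else {0}) with hDdef
    have hget : ∀ i, i < 2 * n + 3 →
        D.getD i ∅ = if i < n + 2 then ∅ else {0} := by
      intro i h
      rw [hDdef, getD_ofFn _ i h]
    have hsat : sat D ((nextPow (n + 1) (LTL.atom 0)).untl (.atom 0)) 0 := by
      refine ⟨n + 2, by omega, ?_, ?_⟩
      · show (0 : ℕ) ∈ D.getD (n + 2) ∅
        rw [hget (n + 2) (by omega)]
        simp
      · intro k h1 h2
        rw [sat_nextPow]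
        show (0 : ℕ) ∈ D.getD (k + (n + 1)) ∅
        rw [hget (k + (n + 1)) (by omega)]
        simp [show ¬ k + (n + 1) < n + 2 from by omega]
    have := (sat_botU 0 D 0).mp ((hEq D 0).mp hsat)
    rw [hget 1 (by omega)] at this
    simp at this
end

section
/- Let q, q' be queries in Q⁻σ[U] of temporal depth at most d with q not entailing q', and let N_d be the number of pairwise non-equivalent queries in Q⁻σ[U] of depth at most d. Then there exists a data instance D of length at most N_d such that D,0 ⊨ q and D,0 ⊭ q'. -/
/-- Whether a query contains an occurrence of `U`. -/
def hasU {σ : Type} : LTL σ → Bool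
  | .atom _ => false
  | .top => false
  | .bot => false
  | .and p q => hasU p || hasU q
  | .next p => hasU p
  | .ev p => hasU p
  | .evr p => hasU p
  | .untl _ _ => true

/-- The class `Q⁻σ[U]`: queries built from atoms, `⊤`, `⊥`, `∧` and `U`, where
the left-hand side of every `U` contains no `U`. -/
inductive IsQm {σ : Type} : LTL σ → Prop
  | atom (a : σ) : IsQm (.atom a)
  | top : IsQm .top
  | bot : IsQm .bot
  | and {p q : LTL σ} : IsQm p → IsQm q → IsQm (p.and q)
  | untl {p q : LTL σ} : IsQm p → IsQm q → hasU p = false → IsQm (p.untl q)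

/-- Temporal depth: the maximal nesting of temporal operators. -/
def tdp {σ : Type} : LTL σ → ℕ
  | .atom _ => 0
  | .top => 0
  | .bot => 0
  | .and p q => max (tdp p) (tdp q)
  | .next p => tdp p + 1
  | .ev p => tdp p + 1
  | .evr p => tdp p + 1
  | .untl p q => max (tdp p) (tdp q) + 1

/-- `Nd σ d`: the number of pairwise non-equivalent queries in `Q⁻σ[U]` of
temporal depth at most `d`. -/
noncomputable def Nd (σ : Type) (d : ℕ) : ℕ :=
  Nat.card (Quot (fun (p q : {q : LTL σ // IsQm q ∧ tdp q ≤ d}) => equivQ p.1 q.1))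

section Aux
open Classical
variable {σ : Type}

/-- Conjunction of a list of formulas. -/
noncomputable def conjL (L : List (LTL σ)) : LTL σ := L.foldr .and .top

lemma sat_conjL (D : List (Finset σ)) (L : List (LTL σ)) (ℓ : ℕ) :
    sat D (conjL L) ℓ ↔ ∀ ψ ∈ L, sat D ψ ℓ := by
  induction L with
  | nil => simp [conjL, sat]
  | cons a L ih => simp only [conjL, List.foldr, sat, List.mem_cons] at ih ⊢; rw [ih]; aesop

lemma sat_conjF_s8 (D : List (Finset σ)) (ρ : Finset σ) (ℓ : ℕ) :
    sat D (conjF ρ) ℓ ↔ ∀ a ∈ ρ, a ∈ D.getD ℓ ∅ := by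
  rw [conjF]
  have h : ∀ L : List σ, sat D (L.foldr (fun a r => (LTL.atom a).and r) LTL.top) ℓ ↔
      ∀ a ∈ L, a ∈ D.getD ℓ ∅ := by
    intro L; induction L with
    | nil => simp [sat]
    | cons a L ih => simp only [List.foldr, sat, List.mem_cons] at ih ⊢; rw [ih]; aesop
  rw [h]; simp [Finset.mem_toList]

lemma isQm_conjL {L : List (LTL σ)} (h : ∀ ψ ∈ L, IsQm ψ) : IsQm (conjL L) := by
  induction L with
  | nil => exact IsQm.top
  | cons a L ih =>
    exact IsQm.and (h a (by simp)) (ih fun ψ hψ => h ψ (by simp [hψ]))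

lemma tdp_conjL {L : List (LTL σ)} {d : ℕ} (h : ∀ ψ ∈ L, tdp ψ ≤ d) : tdp (conjL L) ≤ d := by
  induction L with
  | nil => simp [conjL, tdp]
  | cons a L ih =>
    have := ih fun ψ hψ => h ψ (by simp [hψ])
    simp only [conjL, List.foldr] at this ⊢
    simp [tdp, this, h a (by simp)]

lemma isQm_conjF (ρ : Finset σ) : IsQm (conjF ρ) := by
  rw [conjF]
  induction ρ.toList with
  | nil => exact IsQm.top
  | cons a L ih => exact IsQm.and (IsQm.atom a) ih

lemma hasU_conjF (ρ : Finset σ) : hasU (conjF ρ) = false := by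
  rw [conjF]
  induction ρ.toList with
  | nil => rfl
  | cons a L ih => simp [hasU, ih]

lemma tdp_conjF (ρ : Finset σ) : tdp (conjF ρ) = 0 := by
  rw [conjF]
  induction ρ.toList with
  | nil => rfl
  | cons a L ih => simp [tdp, ih]

/-- U-free Qm formulas depend only on the current letter. -/
lemma sat_letter {p : LTL σ} (h : IsQm p) (hU : hasU p = false) :
    ∀ (D D' : List (Finset σ)) (ℓ ℓ' : ℕ), D.getD ℓ ∅ = D'.getD ℓ' ∅ →
      (sat D p ℓ ↔ sat D' p ℓ') := by
  induction h with
  | atom a =>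
    intro D D' ℓ ℓ' he
    rw [List.getD_eq_getElem?_getD, List.getD_eq_getElem?_getD] at he
    have he' := he
    simp [sat, he']
  | top => intro _ _ _ _ _; simp [sat]
  | bot => intro _ _ _ _ _; simp [sat]
  | and h1 h2 ih1 ih2 =>
    intro D D' ℓ ℓ' he
    simp only [hasU, Bool.or_eq_false_iff] at hU
    simp [sat, ih1 hU.1 D D' ℓ ℓ' he, ih2 hU.2 D D' ℓ ℓ' he]
  | untl h1 h2 h3 ih1 ih2 => simp [hasU] at hU

/-- Normal forms for U-free formulas. -/
noncomputable def pform : Option (Finset σ) → LTL σ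
  | none => .bot
  | some ρ => conjF ρ

lemma isQm_pform (po : Option (Finset σ)) : IsQm (pform po) := by
  cases po with
  | none => exact IsQm.bot
  | some ρ => exact isQm_conjF ρ

lemma hasU_pform (po : Option (Finset σ)) : hasU (pform po) = false := by
  cases po with
  | none => rfl
  | some ρ => exact hasU_conjF ρ

lemma tdp_pform (po : Option (Finset σ)) : tdp (pform po) = 0 := by
  cases po with
  | none => rfl
  | some ρ => exact tdp_conjF ρ

lemma equivQ_refl (p : LTL σ) : equivQ p p := fun _ _ => Iff.rfl

lemma equivQ_symm {p q : LTL σ} (h : equivQ p q) : equivQ q p := fun D ℓ => (h D ℓ).symm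

lemma equivQ_trans {p q r : LTL σ} (h : equivQ p q) (h' : equivQ q r) : equivQ p r :=
  fun D ℓ => (h D ℓ).trans (h' D ℓ)

lemma equivQ_untl_congr {p p' r r' : LTL σ} (hp : equivQ p p') (hr : equivQ r r') :
    equivQ (p.untl r) (p'.untl r') := by
  intro D ℓ
  simp only [sat]
  constructor
  · rintro ⟨m, hm, hr1, hk⟩
    exact ⟨m, hm, (hr D m).1 hr1, fun k h1 h2 => (hp D k).1 (hk k h1 h2)⟩
  · rintro ⟨m, hm, hr1, hk⟩
    exact ⟨m, hm, (hr D m).2 hr1, fun k h1 h2 => (hp D k).2 (hk k h1 h2)⟩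

lemma equivQ_and_congr {p p' r r' : LTL σ} (hp : equivQ p p') (hr : equivQ r r') :
    equivQ (p.and r) (p'.and r') := by
  intro D ℓ
  simp only [sat]
  rw [hp D ℓ, hr D ℓ]

/-- Conjunctions of atom-sets combine under `∧`. -/
lemma equivQ_conjF_union (ρ1 ρ2 : Finset σ) [DecidableEq σ] :
    equivQ ((conjF ρ1).and (conjF ρ2)) (conjF (ρ1 ∪ ρ2)) := by
  intro D ℓ
  simp only [sat, sat_conjF_s8, Finset.mem_union]
  constructor
  · rintro ⟨h1, h2⟩ a ha
    cases ha with
    | inl h => exact h1 a h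
    | inr h => exact h2 a h
  · intro h
    exact ⟨fun a ha => h a (Or.inl ha), fun a ha => h a (Or.inr ha)⟩

/-- Every U-free Qm formula is equivalent to `⊥` or a conjunction of atoms. -/
lemma ufree_nf [DecidableEq σ] {p : LTL σ} (h : IsQm p) (hU : hasU p = false) :
    ∃ po : Option (Finset σ), equivQ p (pform po) := by
  induction h with
  | atom a =>
    refine ⟨some {a}, fun D ℓ => ?_⟩
    simp [pform, sat_conjF_s8, sat]
  | top =>
    refine ⟨some ∅, fun D ℓ => ?_⟩
    simp [pform, sat_conjF_s8, sat]
  | bot => exact ⟨none, equivQ_refl _⟩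
  | and h1 h2 ih1 ih2 =>
    simp only [hasU, Bool.or_eq_false_iff] at hU
    obtain ⟨po1, hp1⟩ := ih1 hU.1
    obtain ⟨po2, hp2⟩ := ih2 hU.2
    match po1, po2 with
    | none, _ =>
      refine ⟨none, fun D ℓ => ?_⟩
      have := hp1 D ℓ
      simp only [pform, sat] at this ⊢
      tauto
    | some ρ1, none =>
      refine ⟨none, fun D ℓ => ?_⟩
      have := hp2 D ℓ
      simp only [pform, sat] at this ⊢
      tauto
    | some ρ1, some ρ2 =>
      exact ⟨some (ρ1 ∪ ρ2), equivQ_trans (equivQ_and_congr hp1 hp2) (equivQ_conjF_union ρ1 ρ2)⟩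
  | untl h1 h2 h3 ih1 ih2 => simp [hasU] at hU

/-- Qm formulas of depth 0 are U-free. -/
lemma hasU_eq_false_of_tdp_zero {p : LTL σ} (h : IsQm p) (hd : tdp p ≤ 0) : hasU p = false := by
  induction h with
  | atom a => rfl
  | top => rfl
  | bot => rfl
  | and h1 h2 ih1 ih2 =>
    simp only [tdp, max_le_iff] at hd
    simp [hasU, ih1 hd.1, ih2 hd.2]
  | untl h1 h2 h3 ih1 ih2 => simp [tdp] at hd

/-- The list of subformulas (for the fragment of interest). -/
def subf : LTL σ → List (LTL σ)
  | .and p r => .and p r :: (subf p ++ subf r)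
  | .untl p r => .untl p r :: (subf p ++ subf r)
  | p => [p]

lemma self_mem_subf (p : LTL σ) : p ∈ subf p := by
  cases p <;> simp [subf]

lemma subf_closed {Q ψ : LTL σ} (h : ψ ∈ subf Q) :
    (∀ p r, ψ = LTL.and p r → p ∈ subf Q ∧ r ∈ subf Q) ∧
    (∀ p r, ψ = LTL.untl p r → p ∈ subf Q ∧ r ∈ subf Q) := by
  induction Q with
  | and a b iha ihb =>
    simp only [subf, List.mem_cons, List.mem_append] at h
    rcases h with h | h | h
    · subst h
      constructor
      · rintro p r ⟨rfl, rfl⟩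
        constructor
        · simp [subf, self_mem_subf]
        · simp [subf, self_mem_subf]
      · rintro p r ⟨⟩
    · refine ⟨fun p r hpr => ?_, fun p r hpr => ?_⟩
      · have := (iha h).1 p r hpr
        simp [subf, this.1, this.2]
      · have := (iha h).2 p r hpr
        simp [subf, this.1, this.2]
    · refine ⟨fun p r hpr => ?_, fun p r hpr => ?_⟩
      · have := (ihb h).1 p r hpr
        simp [subf, this.1, this.2]
      · have := (ihb h).2 p r hpr
        simp [subf, this.1, this.2]
  | untl a b iha ihb =>
    simp only [subf, List.mem_cons, List.mem_append] at h
    rcases h with h | h | h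
    · subst h
      constructor
      · rintro p r ⟨⟩
      · rintro p r ⟨rfl, rfl⟩
        constructor
        · simp [subf, self_mem_subf]
        · simp [subf, self_mem_subf]
    · refine ⟨fun p r hpr => ?_, fun p r hpr => ?_⟩
      · have := (iha h).1 p r hpr
        simp [subf, this.1, this.2]
      · have := (iha h).2 p r hpr
        simp [subf, this.1, this.2]
    · refine ⟨fun p r hpr => ?_, fun p r hpr => ?_⟩
      · have := (ihb h).1 p r hpr
        simp [subf, this.1, this.2]
      · have := (ihb h).2 p r hpr
        simp [subf, this.1, this.2]
  | atom a =>
    simp only [subf, List.mem_singleton] at h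
    subst h
    exact ⟨by rintro p r ⟨⟩, by rintro p r ⟨⟩⟩
  | top =>
    simp only [subf, List.mem_singleton] at h
    subst h
    exact ⟨by rintro p r ⟨⟩, by rintro p r ⟨⟩⟩
  | bot =>
    simp only [subf, List.mem_singleton] at h
    subst h
    exact ⟨by rintro p r ⟨⟩, by rintro p r ⟨⟩⟩
  | next a ih =>
    simp only [subf, List.mem_singleton] at h
    subst h
    exact ⟨by rintro p r ⟨⟩, by rintro p r ⟨⟩⟩
  | ev a ih =>
    simp only [subf, List.mem_singleton] at h
    subst h
    exact ⟨by rintro p r ⟨⟩, by rintro p r ⟨⟩⟩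
  | evr a ih =>
    simp only [subf, List.mem_singleton] at h
    subst h
    exact ⟨by rintro p r ⟨⟩, by rintro p r ⟨⟩⟩

lemma isQm_of_mem_subf {Q ψ : LTL σ} (hQ : IsQm Q) (h : ψ ∈ subf Q) : IsQm ψ := by
  induction hQ with
  | atom a => simp only [subf, List.mem_singleton] at h; subst h; exact IsQm.atom a
  | top => simp only [subf, List.mem_singleton] at h; subst h; exact IsQm.top
  | bot => simp only [subf, List.mem_singleton] at h; subst h; exact IsQm.bot
  | and h1 h2 ih1 ih2 =>
    simp only [subf, List.mem_cons, List.mem_append] at h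
    rcases h with h | h | h
    · subst h; exact IsQm.and h1 h2
    · exact ih1 h
    · exact ih2 h
  | untl h1 h2 h3 ih1 ih2 =>
    simp only [subf, List.mem_cons, List.mem_append] at h
    rcases h with h | h | h
    · subst h; exact IsQm.untl h1 h2 h3
    · exact ih1 h
    · exact ih2 h

lemma tdp_le_of_mem_subf {Q ψ : LTL σ} (h : ψ ∈ subf Q) : tdp ψ ≤ tdp Q := by
  induction Q with
  | and a b iha ihb =>
    simp only [subf, List.mem_cons, List.mem_append] at h
    rcases h with h | h | h
    · subst h; exact le_refl _
    · exact le_trans (iha h) (le_max_left _ _)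
    · exact le_trans (ihb h) (le_max_right _ _)
  | untl a b iha ihb =>
    simp only [subf, List.mem_cons, List.mem_append] at h
    rcases h with h | h | h
    · subst h; exact le_refl _
    · exact le_trans (iha h) (le_trans (le_max_left _ _) (Nat.le_succ _))
    · exact le_trans (ihb h) (le_trans (le_max_right _ _) (Nat.le_succ _))
  | atom a => simp only [subf, List.mem_singleton] at h; subst h; exact le_refl _
  | top => simp only [subf, List.mem_singleton] at h; subst h; exact le_refl _
  | bot => simp only [subf, List.mem_singleton] at h; subst h; exact le_refl _
  | next a ih => simp only [subf, List.mem_singleton] at h; subst h; exact le_refl _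
  | ev a ih => simp only [subf, List.mem_singleton] at h; subst h; exact le_refl _
  | evr a ih => simp only [subf, List.mem_singleton] at h; subst h; exact le_refl _

/-- Index map after deleting the segment `(i, j]`. -/
def idxmap (i j ℓ : ℕ) : ℕ := if ℓ ≤ i then ℓ else ℓ + (j - i)

lemma getD_delete (D : List (Finset σ)) (i j : ℕ) (hij : i < j) (hjlen : j < D.length) (ℓ : ℕ) :
    (D.take (i+1) ++ D.drop (j+1)).getD ℓ ∅ = D.getD (idxmap i j ℓ) ∅ := by
  have hilen : i + 1 ≤ D.length := by omega
  have hlen : (D.take (i+1)).length = i + 1 := by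
    rw [List.length_take]; omega
  rw [List.getD_eq_getElem?_getD, List.getD_eq_getElem?_getD]
  by_cases hℓ : ℓ ≤ i
  · rw [List.getElem?_append, if_pos (by omega : ℓ < (D.take (i+1)).length)]
    rw [List.getElem?_take, if_pos (by omega : ℓ < i + 1)]
    simp [idxmap, hℓ]
  · rw [List.getElem?_append, if_neg (by omega : ¬ ℓ < (D.take (i+1)).length)]
    rw [List.getElem?_drop]
    simp only [idxmap, if_neg hℓ]
    congr 2
    omega

lemma idxmap_le {i j ℓ : ℕ} (h : ℓ ≤ i) : idxmap i j ℓ = ℓ := if_pos h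

lemma idxmap_gt {i j ℓ : ℕ} (h : ¬ ℓ ≤ i) : idxmap i j ℓ = ℓ + (j - i) := if_neg h

/-- The key deletion lemma: if positions `i < j` agree on all subformulas of `Q`,
then deleting the segment `(i, j]` does not change the truth of any subformula
of `Q` (at correspondingly shifted positions). -/
lemma sat_delete (D : List (Finset σ)) (i j : ℕ) (hij : i < j) (hjlen : j < D.length)
    (Q : LTL σ) (hty : ∀ χ ∈ subf Q, (sat D χ i ↔ sat D χ j)) :
    ∀ ψ, IsQm ψ → ψ ∈ subf Q → ∀ ℓ,
      (sat (D.take (i+1) ++ D.drop (j+1)) ψ ℓ ↔ sat D ψ (idxmap i j ℓ)) := by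
  set D' := D.take (i+1) ++ D.drop (j+1) with hD'
  intro ψ hψ
  induction hψ with
  | atom a =>
    intro _ ℓ
    simp only [sat]
    rw [getD_delete D i j hij hjlen ℓ]
  | top => intro _ ℓ; simp [sat]
  | bot => intro _ ℓ; simp [sat]
  | and h1 h2 ih1 ih2 =>
    intro hmem ℓ
    have hc := (subf_closed hmem).1 _ _ rfl
    simp only [sat]
    rw [ih1 hc.1 ℓ, ih2 hc.2 ℓ]
  | @untl p r hp hr hpU ihp ihr =>
    intro hmem ℓ
    have hc := (subf_closed hmem).2 _ _ rfl
    have hfr : ∀ m, sat D' r m ↔ sat D r (idxmap i j m) := ihr hc.2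
    have hfp : ∀ k, sat D' p k ↔ sat D p (idxmap i j k) := fun k =>
      sat_letter hp hpU D' D k (idxmap i j k) (getD_delete D i j hij hjlen k)
    have hU : sat D (p.untl r) i ↔ sat D (p.untl r) j := hty _ hmem
    simp only [sat]
    constructor
    · -- from the shorter word to the original word
      rintro ⟨m, hm, hrm, hks⟩
      by_cases hℓi : ℓ ≤ i
      · rw [idxmap_le hℓi]
        by_cases hmi : m ≤ i
        · refine ⟨m, hm, ?_, fun k h1 h2 => ?_⟩
          · have := (hfr m).1 hrm; rwa [idxmap_le hmi] at this
          · have := (hfp k).1 (hks k h1 h2)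
            rwa [idxmap_le (by omega)] at this
        · -- m > i, so the witness maps beyond j
          have hfm : idxmap i j m = m + (j - i) := idxmap_gt hmi
          have hUj : sat D (p.untl r) j := by
            refine ⟨m + (j - i), by omega, by rw [← hfm]; exact (hfr m).1 hrm,
              fun k₀ h1 h2 => ?_⟩
            have hk : ℓ < k₀ - (j - i) := by omega
            have hk2 : k₀ - (j - i) < m := by omega
            have := (hfp (k₀ - (j - i))).1 (hks _ hk hk2)
            rwa [idxmap_gt (by omega), Nat.sub_add_cancel (by omega)] at this
          obtain ⟨m₀, hm₀, hrm₀, hks₀⟩ := hU.2 hUj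
          refine ⟨m₀, by omega, hrm₀, fun k h1 h2 => ?_⟩
          by_cases hki : k ≤ i
          · have := (hfp k).1 (hks k h1 (by omega))
            rwa [idxmap_le hki] at this
          · exact hks₀ k (by omega) h2
      · -- ℓ > i : everything lives beyond j
        rw [idxmap_gt hℓi]
        refine ⟨m + (j - i), by omega, ?_, fun k₀ h1 h2 => ?_⟩
        · have := (hfr m).1 hrm; rwa [idxmap_gt (by omega)] at this
        · have hk : ℓ < k₀ - (j - i) := by omega
          have hk2 : k₀ - (j - i) < m := by omega
          have := (hfp (k₀ - (j - i))).1 (hks _ hk hk2)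
          rwa [idxmap_gt (by omega), Nat.sub_add_cancel (by omega)] at this
    · -- from the original word to the shorter word
      rintro ⟨m, hm, hrm, hks⟩
      by_cases hℓi : ℓ ≤ i
      · rw [idxmap_le hℓi] at hm hks
        by_cases hmi : m ≤ i
        · refine ⟨m, hm, ?_, fun k h1 h2 => ?_⟩
          · exact (hfr m).2 (by rwa [idxmap_le hmi])
          · exact (hfp k).2 (by rw [idxmap_le (by omega)]; exact hks k h1 h2)
        · by_cases hmj : m ≤ j
          · -- witness falls in the deleted segment: go through the type of i and j
            have hUi : sat D (p.untl r) i :=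
              ⟨m, by omega, hrm, fun k h1 h2 => hks k (by omega) h2⟩
            obtain ⟨m₂, hm₂, hrm₂, hks₂⟩ := hU.1 hUi
            refine ⟨m₂ - (j - i), by omega, ?_, fun k h1 h2 => ?_⟩
            · exact (hfr _).2 (by rw [idxmap_gt (by omega), Nat.sub_add_cancel (by omega)]; exact hrm₂)
            · by_cases hki : k ≤ i
              · exact (hfp k).2 (by rw [idxmap_le hki]; exact hks k h1 (by omega))
              · refine (hfp k).2 ?_
                rw [idxmap_gt hki]
                exact hks₂ _ (by omega) (by omega)
          · -- witness beyond j
            refine ⟨m - (j - i), by omega, ?_, fun k h1 h2 => ?_⟩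
            · exact (hfr _).2 (by rw [idxmap_gt (by omega), Nat.sub_add_cancel (by omega)]; exact hrm)
            · by_cases hki : k ≤ i
              · exact (hfp k).2 (by rw [idxmap_le hki]; exact hks k h1 (by omega))
              · refine (hfp k).2 ?_
                rw [idxmap_gt hki]
                exact hks _ (by omega) (by omega)
      · rw [idxmap_gt hℓi] at hm hks
        refine ⟨m - (j - i), by omega, ?_, fun k h1 h2 => ?_⟩
        · exact (hfr _).2 (by rw [idxmap_gt (by omega), Nat.sub_add_cancel (by omega)]; exact hrm)
        · refine (hfp k).2 ?_
          rw [idxmap_gt (by omega)]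
          exact hks _ (by omega) (by omega)

/-- The type whose cardinality is `Nd`. -/
def QdT (σ : Type) (d : ℕ) : Type :=
  Quot (fun (p q : {q : LTL σ // IsQm q ∧ tdp q ≤ d}) => equivQ p.1 q.1)

def satQ {σ : Type} {d : ℕ} : QdT σ d → List (Finset σ) → ℕ → Prop :=
  Quot.lift (fun s => fun D ℓ => sat D s.1 ℓ) (by
    intro a b h
    funext D ℓ
    exact propext (h D ℓ))

lemma equivQ_of_mk_eq {d : ℕ} {s t : {q : LTL σ // IsQm q ∧ tdp q ≤ d}}
    (h : (Quot.mk _ s : QdT σ d) = Quot.mk _ t) : equivQ s.1 t.1 := by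
  intro D ℓ
  have := congrFun (congrFun (congrArg satQ h) D) ℓ
  exact iff_of_eq this

lemma equivQ_out {d : ℕ} (s : {q : LTL σ // IsQm q ∧ tdp q ≤ d}) :
    equivQ s.1 ((Quot.mk _ s : QdT σ d).out).1 :=
  equivQ_of_mk_eq (Quot.out_eq _).symm

/-- Building a formula from a normal form. -/
noncomputable def nfUntl {d : ℕ} (pr : Option (Finset σ) × QdT σ d) : LTL σ :=
  (pform pr.1).untl pr.2.out.1

noncomputable def build {d : ℕ} :
    Option (Finset σ × Finset (Option (Finset σ) × QdT σ d)) → LTL σ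
  | none => .bot
  | some (ρ, S) => (conjF ρ).and (conjL (S.toList.map nfUntl))

lemma isQm_nfUntl {d : ℕ} (pr : Option (Finset σ) × QdT σ d) : IsQm (nfUntl pr) :=
  IsQm.untl (isQm_pform pr.1) pr.2.out.2.1 (hasU_pform pr.1)

lemma tdp_nfUntl {d : ℕ} (pr : Option (Finset σ) × QdT σ d) : tdp (nfUntl pr) ≤ d + 1 := by
  have h1 := tdp_pform (σ := σ) pr.1
  have h2 := pr.2.out.2.2
  simp only [nfUntl, tdp]
  omega

lemma isQm_build {d : ℕ} (nf : Option (Finset σ × Finset (Option (Finset σ) × QdT σ d))) :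
    IsQm (build nf) := by
  match nf with
  | none => exact IsQm.bot
  | some (ρ, S) =>
    refine IsQm.and (isQm_conjF ρ) (isQm_conjL ?_)
    intro ψ hψ
    simp only [List.mem_map] at hψ
    obtain ⟨pr, _, rfl⟩ := hψ
    exact isQm_nfUntl pr

lemma tdp_build {d : ℕ} (nf : Option (Finset σ × Finset (Option (Finset σ) × QdT σ d))) :
    tdp (build nf) ≤ d + 1 := by
  match nf with
  | none => simp [build, tdp]
  | some (ρ, S) =>
    have h1 := tdp_conjF (σ := σ) ρ
    have h2 : tdp (conjL (S.toList.map nfUntl)) ≤ d + 1 := by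
      refine tdp_conjL ?_
      intro ψ hψ
      simp only [List.mem_map] at hψ
      obtain ⟨pr, _, rfl⟩ := hψ
      exact tdp_nfUntl pr
    simp only [build, tdp]
    omega

lemma sat_build_some {d : ℕ} (D : List (Finset σ)) (ℓ : ℕ) (ρ : Finset σ)
    (S : Finset (Option (Finset σ) × QdT σ d)) :
    sat D (build (some (ρ, S))) ℓ ↔
      ((∀ a ∈ ρ, a ∈ D.getD ℓ ∅) ∧ ∀ pr ∈ S, sat D (nfUntl pr) ℓ) := by
  simp only [build, sat, sat_conjF_s8, sat_conjL, List.mem_map]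
  constructor
  · rintro ⟨h1, h2⟩
    exact ⟨h1, fun pr hpr => h2 _ ⟨pr, Finset.mem_toList.2 hpr, rfl⟩⟩
  · rintro ⟨h1, h2⟩
    refine ⟨h1, ?_⟩
    rintro ψ ⟨pr, hpr, rfl⟩
    exact h2 pr (Finset.mem_toList.1 hpr)

lemma nf_exists [DecidableEq σ] {d : ℕ} :
    ∀ q : LTL σ, IsQm q → tdp q ≤ d + 1 →
      ∃ nf : Option (Finset σ × Finset (Option (Finset σ) × QdT σ d)),
        equivQ (build nf) q := by
  intro q hq
  induction hq with
  | atom a =>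
    intro _
    refine ⟨some ({a}, ∅), fun D ℓ => ?_⟩
    rw [sat_build_some]
    simp [sat]
  | top =>
    intro _
    refine ⟨some (∅, ∅), fun D ℓ => ?_⟩
    rw [sat_build_some]
    simp [sat]
  | bot => exact fun _ => ⟨none, equivQ_refl _⟩
  | @and q1 q2 h1 h2 ih1 ih2 =>
    intro hd
    simp only [tdp, max_le_iff] at hd
    obtain ⟨nf1, hnf1⟩ := ih1 hd.1
    obtain ⟨nf2, hnf2⟩ := ih2 hd.2
    classical
    match nf1, nf2 with
    | none, _ =>
      refine ⟨none, fun D ℓ => ?_⟩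
      have e1 := hnf1 D ℓ
      simp only [build, sat] at e1 ⊢
      tauto
    | some (ρ1, S1), none =>
      refine ⟨none, fun D ℓ => ?_⟩
      have e2 := hnf2 D ℓ
      simp only [build, sat] at e2 ⊢
      tauto
    | some (ρ1, S1), some (ρ2, S2) =>
      refine ⟨some (ρ1 ∪ ρ2, S1 ∪ S2), fun D ℓ => ?_⟩
      have e1 := hnf1 D ℓ
      have e2 := hnf2 D ℓ
      rw [sat_build_some] at e1 e2 ⊢
      simp only [sat, Finset.mem_union]
      rw [← e1, ← e2]
      constructor
      · rintro ⟨ha, hs⟩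
        exact ⟨⟨fun a h => ha a (Or.inl h), fun pr h => hs pr (Or.inl h)⟩,
          ⟨fun a h => ha a (Or.inr h), fun pr h => hs pr (Or.inr h)⟩⟩
      · rintro ⟨⟨ha1, hs1⟩, ⟨ha2, hs2⟩⟩
        refine ⟨fun a h => ?_, fun pr h => ?_⟩
        · rcases h with h | h
          · exact ha1 a h
          · exact ha2 a h
        · rcases h with h | h
          · exact hs1 pr h
          · exact hs2 pr h
  | @untl p r hp hr hpU ihp ihr =>
    intro hd
    simp only [tdp] at hd
    have hdr : tdp r ≤ d := by omega
    obtain ⟨po, hpo⟩ := ufree_nf hp hpU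
    set c : QdT σ d := Quot.mk _ ⟨r, hr, hdr⟩ with hc
    refine ⟨some (∅, {(po, c)}), fun D ℓ => ?_⟩
    rw [sat_build_some]
    simp only [Finset.notMem_empty, false_implies, implies_true, true_and,
      Finset.mem_singleton]
    have hcong : equivQ (nfUntl (po, c)) (p.untl r) := by
      refine equivQ_untl_congr (equivQ_symm hpo) (equivQ_symm ?_)
      exact equivQ_out ⟨r, hr, hdr⟩
    rw [show (∀ pr, pr = (po, c) → sat D (nfUntl pr) ℓ) ↔ sat D (nfUntl (po, c)) ℓ from
      ⟨fun h => h _ rfl, fun h pr hpr => hpr ▸ h⟩]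
    exact hcong D ℓ

lemma finite_QdT (σ : Type) [Fintype σ] [DecidableEq σ] : ∀ d : ℕ, Finite (QdT σ d) := by
  intro d
  induction d with
  | zero =>
    have hsurj : Function.Surjective
        (fun po : Option (Finset σ) =>
          (Quot.mk _ ⟨pform po, isQm_pform po, le_of_eq (tdp_pform po)⟩ : QdT σ 0)) := by
      intro c
      set s := c.out with hs
      have hU : hasU s.1 = false := hasU_eq_false_of_tdp_zero s.2.1 s.2.2
      obtain ⟨po, hpo⟩ := ufree_nf s.2.1 hU
      refine ⟨po, ?_⟩
      calc (Quot.mk _ ⟨pform po, isQm_pform po, le_of_eq (tdp_pform po)⟩ : QdT σ 0)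
          = Quot.mk _ s := Quot.sound (equivQ_symm hpo)
        _ = c := Quot.out_eq c
    haveI : Finite (Option (Finset σ)) :=
      Finite.of_equiv _ (Equiv.optionEquivSumPUnit.{0,0} (Finset σ)).symm
    exact Finite.of_surjective _ hsurj
  | succ d ih =>
    haveI := ih
    haveI : Finite (Option (Finset σ)) :=
      Finite.of_equiv _ (Equiv.optionEquivSumPUnit.{0,0} (Finset σ)).symm
    haveI : Finite (Finset (Option (Finset σ) × QdT σ d)) :=
      Finite.of_injective (fun S => (S : Set (Option (Finset σ) × QdT σ d)))
        (fun a b h => by simpa [Finset.coe_inj] using h)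
    haveI : Finite (Option (Finset σ × Finset (Option (Finset σ) × QdT σ d))) :=
      Finite.of_equiv _
        (Equiv.optionEquivSumPUnit.{0,0} (Finset σ × Finset (Option (Finset σ) × QdT σ d))).symm
    have hsurj : Function.Surjective
        (fun nf : Option (Finset σ × Finset (Option (Finset σ) × QdT σ d)) =>
          (Quot.mk _ ⟨build nf, isQm_build nf, tdp_build nf⟩ : QdT σ (d+1))) := by
      intro c
      set s := c.out with hs
      obtain ⟨nf, hnf⟩ := nf_exists s.1 s.2.1 s.2.2
      refine ⟨nf, ?_⟩
      calc (Quot.mk _ ⟨build nf, isQm_build nf, tdp_build nf⟩ : QdT σ (d+1))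
          = Quot.mk _ s := Quot.sound hnf
        _ = c := Quot.out_eq c
    exact Finite.of_surjective _ hsurj

/-- Dropping a prefix shifts satisfaction. -/
lemma sat_drop (ψ : LTL σ) (k : ℕ) (D : List (Finset σ)) :
    ∀ m, sat (D.drop k) ψ m ↔ sat D ψ (k + m) := by
  induction ψ with
  | atom a =>
    intro m
    simp only [sat, List.getD_eq_getElem?_getD, List.getElem?_drop]
  | top => intro m; simp [sat]
  | bot => intro m; simp [sat]
  | and p r ihp ihr => intro m; simp only [sat]; rw [ihp m, ihr m]
  | next p ihp =>
    intro m
    simp only [sat]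
    rw [ihp (m+1), show k + (m + 1) = k + m + 1 by omega]
  | ev p ihp =>
    intro m
    simp only [sat]
    constructor
    · rintro ⟨m', hm', hs⟩
      exact ⟨k + m', by omega, (ihp m').1 hs⟩
    · rintro ⟨m'', hm'', hs⟩
      refine ⟨m'' - k, by omega, (ihp (m'' - k)).2 ?_⟩
      rwa [show k + (m'' - k) = m'' by omega]
  | evr p ihp =>
    intro m
    simp only [sat]
    constructor
    · rintro ⟨m', hm', hs⟩
      exact ⟨k + m', by omega, (ihp m').1 hs⟩
    · rintro ⟨m'', hm'', hs⟩
      refine ⟨m'' - k, by omega, (ihp (m'' - k)).2 ?_⟩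
      rwa [show k + (m'' - k) = m'' by omega]
  | untl p r ihp ihr =>
    intro m
    simp only [sat]
    constructor
    · rintro ⟨m', hm', hs, hks⟩
      refine ⟨k + m', by omega, (ihr m').1 hs, fun k₀ h1 h2 => ?_⟩
      have := (ihp (k₀ - k)).1 (hks (k₀ - k) (by omega) (by omega))
      rwa [show k + (k₀ - k) = k₀ by omega] at this
    · rintro ⟨m'', hm'', hs, hks⟩
      refine ⟨m'' - k, by omega, (ihr (m'' - k)).2 ?_, fun k₀ h1 h2 => ?_⟩
      · rwa [show k + (m'' - k) = m'' by omega]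
      · exact (ihp k₀).2 (hks (k + k₀) (by omega) (by omega))

end Aux
/-- If `q, q' ∈ Q⁻σ[U]` have temporal depth at most `d` and `q ⊭ q'`, then some
data instance of length at most `N_d` (list length `≤ N_d + 1`) satisfies `q`
but not `q'` at position `0`. -/
theorem separating_instance_of_bounded_length (σ : Type) [Fintype σ] [DecidableEq σ]
    [Nonempty σ] (d : ℕ) (q q' : LTL σ) (hq : IsQm q) (hq' : IsQm q')
    (hd : tdp q ≤ d) (hd' : tdp q' ≤ d) (hne : ¬ entailsQ q q') :
    ∃ D : List (Finset σ), D.length ≤ Nd σ d + 1 ∧ sat D q 0 ∧ ¬ sat D q' 0 := by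
  classical
  haveI hfin : Finite (QdT σ d) := finite_QdT σ d
  rw [entailsQ] at hne
  push_neg at hne
  obtain ⟨D₀, ℓ₀, hq0, hq'0⟩ := hne
  have hq1 : sat (D₀.drop ℓ₀) q 0 := (sat_drop q ℓ₀ D₀ 0).2 (by simpa using hq0)
  have hq'1 : ¬ sat (D₀.drop ℓ₀) q' 0 := fun h =>
    hq'0 (by simpa using (sat_drop q' ℓ₀ D₀ 0).1 h)
  have hex : ∃ n, ∃ D : List (Finset σ), D.length = n ∧ sat D q 0 ∧ ¬ sat D q' 0 :=
    ⟨_, _, rfl, hq1, hq'1⟩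
  obtain ⟨D, hlen, hDq, hDq'⟩ := Nat.find_spec hex
  refine ⟨D, ?_, hDq, hDq'⟩
  set Q : LTL σ := q.and q' with hQ
  have hQm : IsQm Q := IsQm.and hq hq'
  have hQd : tdp Q ≤ d := by simp [hQ, tdp, hd, hd']
  set τ : ℕ → LTL σ := fun m => conjL ((subf Q).filter (fun ψ => decide (sat D ψ m)))
    with hτ
  have hτsat : ∀ m, sat D (τ m) m := by
    intro m
    rw [hτ, sat_conjL]
    intro ψ hψ
    rw [List.mem_filter] at hψ
    exact of_decide_eq_true hψ.2
  have hτmem : ∀ m m', sat D (τ m) m' → ∀ ψ ∈ subf Q, sat D ψ m → sat D ψ m' := by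
    intro m m' h ψ hψ hs
    rw [hτ, sat_conjL] at h
    exact h ψ (List.mem_filter.2 ⟨hψ, decide_eq_true hs⟩)
  have hτQm : ∀ m, IsQm (τ m) :=
    fun m => isQm_conjL (fun ψ hψ => isQm_of_mem_subf hQm (List.mem_filter.1 hψ).1)
  have hτd : ∀ m, tdp (τ m) ≤ d :=
    fun m => tdp_conjL (fun ψ hψ =>
      le_trans (tdp_le_of_mem_subf (List.mem_filter.1 hψ).1) hQd)
  set g : Fin D.length → QdT σ d :=
    fun m => Quot.mk _ ⟨τ m.1, hτQm m.1, hτd m.1⟩ with hg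
  have hclaim : ∀ i j : Fin D.length, i.1 < j.1 → g i = g j → False := by
    intro i j hij hgij
    have he : equivQ (τ i.1) (τ j.1) := equivQ_of_mk_eq hgij
    have hty : ∀ χ ∈ subf Q, (sat D χ i.1 ↔ sat D χ j.1) := by
      intro χ hχ
      constructor
      · intro h
        exact hτmem i.1 j.1 ((he D j.1).2 (hτsat j.1)) χ hχ h
      · intro h
        exact hτmem j.1 i.1 ((he D i.1).1 (hτsat i.1)) χ hχ h
    have hqmem : q ∈ subf Q := by
      rw [hQ]
      simp only [subf, List.mem_cons, List.mem_append]
      exact Or.inr (Or.inl (self_mem_subf q))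
    have hq'mem : q' ∈ subf Q := by
      rw [hQ]
      simp only [subf, List.mem_cons, List.mem_append]
      exact Or.inr (Or.inr (self_mem_subf q'))
    have hdel := sat_delete D i.1 j.1 hij j.2 Q hty
    have hD'q : sat (D.take (i.1+1) ++ D.drop (j.1+1)) q 0 := by
      rw [hdel q hq hqmem 0, idxmap_le (Nat.zero_le i.1)]
      exact hDq
    have hD'q' : ¬ sat (D.take (i.1+1) ++ D.drop (j.1+1)) q' 0 := by
      rw [hdel q' hq' hq'mem 0, idxmap_le (Nat.zero_le i.1)]
      exact hDq'
    have hlt : (D.take (i.1+1) ++ D.drop (j.1+1)).length < Nat.find hex := by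
      rw [← hlen]
      have h1 : i.1 < j.1 := hij
      have h2 : j.1 < D.length := j.2
      simp only [List.length_append, List.length_take, List.length_drop]
      omega
    exact Nat.find_min hex hlt ⟨_, rfl, hD'q, hD'q'⟩
  have hginj : Function.Injective g := by
    intro a b hab
    rcases lt_trichotomy a.1 b.1 with h | h | h
    · exact absurd hab (fun hh => hclaim a b h hh)
    · exact Fin.ext h
    · exact absurd hab.symm (fun hh => hclaim b a h hh)
  have hcard : D.length ≤ Nat.card (QdT σ d) := by
    have := Nat.card_le_card_of_injective g hginj
    simpa using this
  have : Nat.card (QdT σ d) = Nd σ d := rfl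
  omega
end

section
/- Let Σ be a relational signature containing at least a role r and atoms A₁,…,Aₙ, and let q be the ELI-query ∃r.(⋀ᵢ₌₁ⁿ ∃r⁻.Aᵢ). For X ⊆ {1,…,n}, let q_X = (⋀_{i∈X} Aᵢ) ∧ ⋀_{i∉X} ∃r.∃r⁻.(⋀_{j≠i} A_j). Then: (a) q_X does not entail q for every X; and (b) for distinct X₁ ≠ X₂, there is no pointed data instance (D,a) with D ⊭ q(a), D ⊨ q_{X₁}(a), and D ⊨ q_{X₂}(a). Consequently any split partner of {q} in ELI(Σ) has at least 2ⁿ members. -/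
/-- `ELI`-queries over concept names `C` and role names `R`: built from `⊤`,
atoms, `∧`, `∃P.q` and `∃P⁻.q`. -/
inductive ELI (C R : Type) : Type where
  | top : ELI C R
  | atom : C → ELI C R
  | and : ELI C R → ELI C R → ELI C R
  | ex : R → ELI C R → ELI C R
  | exInv : R → ELI C R → ELI C R

/-- A relational data instance over concept names `C`, role names `R` and
individuals `I`. -/
structure DInst (C R I : Type) where
  concept : C → I → Prop
  role : R → I → I → Prop

/-- Satisfaction of an `ELI`-query at an individual. -/
def esat {C R I : Type} (D : DInst C R I) : ELI C R → I → Prop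
  | .top, _ => True
  | .atom A, a => D.concept A a
  | .and p q, a => esat D p a ∧ esat D q a
  | .ex P p, a => ∃ b, D.role P a b ∧ esat D p b
  | .exInv P p, a => ∃ b, D.role P b a ∧ esat D p b

/-- Entailment of `ELI`-queries: satisfaction-preservation over all pointed
data instances. -/
def eentails {C R : Type} (p q : ELI C R) : Prop :=
  ∀ (I : Type) (D : DInst C R I) (a : I), esat D p a → esat D q a

/-- The conjunction of a list of `ELI`-queries. -/
def bigAnd {C R : Type} (l : List (ELI C R)) : ELI C R := l.foldr ELI.and ELI.top

/-- A pointed data instance. -/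
structure PInst (C R : Type) : Type 1 where
  I : Type
  D : DInst C R I
  pt : I

/-- `S` is a split partner of `Q` in `ELI`: an `ELI`-query satisfies some member
of `S` iff it entails no member of `Q`. -/
def splitPartner {C R : Type} (S : Set (PInst C R)) (Q : Set (ELI C R)) : Prop :=
  ∀ q' : ELI C R, (∃ p ∈ S, esat p.D q' p.pt) ↔ ∀ q ∈ Q, ¬ eentails q' q

/-- The query `q = ∃r.(⋀ᵢ ∃r⁻.Aᵢ)` (atoms `A₁,…,Aₙ` encoded as `Fin n`, the
single role `r` as `Unit`). -/
def qSplit (n : ℕ) : ELI (Fin n) Unit :=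
  .ex () (bigAnd ((List.finRange n).map fun i => .exInv () (.atom i)))

/-- The query `q_X = (⋀_{i∈X} Aᵢ) ∧ ⋀_{i∉X} ∃r.∃r⁻.(⋀_{j≠i} A_j)`. -/
noncomputable def qOf (n : ℕ) (X : Finset (Fin n)) : ELI (Fin n) Unit :=
  (bigAnd (X.toList.map ELI.atom)).and
    (bigAnd (((List.finRange n).filter fun i => i ∉ X).map fun i =>
      .ex () (.exInv ()
        (bigAnd (((List.finRange n).filter fun j => j ≠ i).map ELI.atom)))))

-- auxiliary
lemma esat_bigAnd {C R I : Type} (D : DInst C R I) (l : List (ELI C R)) (a : I) :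
    esat D (bigAnd l) a ↔ ∀ q ∈ l, esat D q a := by
  induction l with
  | nil => simp [bigAnd, esat]
  | cons p l ih =>
    simp only [bigAnd, List.foldr_cons, List.mem_cons]
    show esat D p a ∧ esat D (bigAnd l) a ↔ _
    rw [ih]
    constructor
    · rintro ⟨h1, h2⟩ q (rfl | hq)
      · exact h1
      · exact h2 q hq
    · intro h; exact ⟨h p (Or.inl rfl), fun q hq => h q (Or.inr hq)⟩

/-- countermodel for (a) -/
def Da (n : ℕ) (X : Finset (Fin n)) : DInst (Fin n) Unit (Option (Bool × Fin n)) where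
  concept j x := match x with
    | none => j ∈ X
    | some (true, i) => j ≠ i
    | some (false, _) => False
  role _ x y := ∃ i, i ∉ X ∧ y = some (false, i) ∧ (x = none ∨ x = some (true, i))

lemma partA (n : ℕ) (X : Finset (Fin n)) : ¬ eentails (qOf n X) (qSplit n) := by
  intro h
  have hsat : esat (Da n X) (qOf n X) none := by
    constructor
    · rw [esat_bigAnd]
      intro q hq
      simp only [List.mem_map] at hq
      obtain ⟨i, hi, rfl⟩ := hq
      show (Da n X).concept i none
      show i ∈ X
      exact Finset.mem_toList.mp hi
    · rw [esat_bigAnd]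
      intro q hq
      simp only [List.mem_map, List.mem_filter, decide_eq_true_eq] at hq
      obtain ⟨i, ⟨-, hiX⟩, rfl⟩ := hq
      refine ⟨some (false, i), ⟨i, hiX, rfl, Or.inl rfl⟩,
        some (true, i), ⟨i, hiX, rfl, Or.inr rfl⟩, ?_⟩
      rw [esat_bigAnd]
      intro q hq
      simp only [List.mem_map, List.mem_filter, decide_eq_true_eq] at hq
      obtain ⟨j, ⟨-, hj⟩, rfl⟩ := hq
      show (Da n X).concept j (some (true, i))
      exact hj
  obtain ⟨b, hb, hsat2⟩ := h _ (Da n X) none hsat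
  obtain ⟨i, hiX, rfl, -⟩ := hb
  rw [esat_bigAnd] at hsat2
  have h3 := hsat2 (.exInv () (.atom i))
    (List.mem_map.mpr ⟨i, List.mem_finRange i, rfl⟩)
  obtain ⟨c, hc, hci⟩ := h3
  obtain ⟨i', -, heq, hc'⟩ := hc
  have hii : i' = i := ((Prod.ext_iff.mp (Option.some_inj.mp heq)).2).symm
  subst hii
  rcases hc' with rfl | rfl
  · exact hiX hci
  · exact hci rfl

/-- key lemma (b): `A_i(a)` and the `i`-witness imply `q(a)`. -/
lemma keyB (n : ℕ) {I : Type} (D : DInst (Fin n) Unit I) (a : I) (i : Fin n)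
    (hA : D.concept i a)
    (hEx : esat D (.ex () (.exInv ()
      (bigAnd (((List.finRange n).filter fun j => j ≠ i).map ELI.atom)))) a) :
    esat D (qSplit n) a := by
  obtain ⟨b, hab, c, hcb, hc⟩ := hEx
  rw [esat_bigAnd] at hc
  refine ⟨b, hab, ?_⟩
  rw [esat_bigAnd]
  intro q hq
  simp only [List.mem_map] at hq
  obtain ⟨j, -, rfl⟩ := hq
  by_cases hji : j = i
  · subst hji; exact ⟨a, hab, hA⟩
  · refine ⟨c, hcb, ?_⟩
    exact hc (.atom j) (List.mem_map.mpr ⟨j, List.mem_filter.mpr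
      ⟨List.mem_finRange j, by simp [hji]⟩, rfl⟩)

lemma qOf_atom (n : ℕ) (X : Finset (Fin n)) {I : Type} (D : DInst (Fin n) Unit I)
    (a : I) (h : esat D (qOf n X) a) {i : Fin n} (hi : i ∈ X) : D.concept i a := by
  have := h.1
  rw [esat_bigAnd] at this
  exact this (.atom i) (List.mem_map.mpr ⟨i, Finset.mem_toList.mpr hi, rfl⟩)

lemma qOf_ex (n : ℕ) (X : Finset (Fin n)) {I : Type} (D : DInst (Fin n) Unit I)
    (a : I) (h : esat D (qOf n X) a) {i : Fin n} (hi : i ∉ X) :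
    esat D (.ex () (.exInv ()
      (bigAnd (((List.finRange n).filter fun j => j ≠ i).map ELI.atom)))) a := by
  have := h.2
  rw [esat_bigAnd] at this
  exact this _ (List.mem_map.mpr ⟨i, List.mem_filter.mpr
    ⟨List.mem_finRange i, by simp [hi]⟩, rfl⟩)

lemma partB (n : ℕ) (X₁ X₂ : Finset (Fin n)) (hne : X₁ ≠ X₂)
    (I : Type) (D : DInst (Fin n) Unit I) (a : I) :
    ¬ (¬ esat D (qSplit n) a ∧ esat D (qOf n X₁) a ∧ esat D (qOf n X₂) a) := by
  rintro ⟨hnq, h1, h2⟩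
  obtain ⟨i, hi⟩ : ∃ i, (i ∈ X₁ ∧ i ∉ X₂) ∨ (i ∈ X₂ ∧ i ∉ X₁) := by
    by_contra hcon
    push_neg at hcon
    exact hne (Finset.ext fun i => by
      have := hcon i
      tauto)
  rcases hi with ⟨hi1, hi2⟩ | ⟨hi1, hi2⟩
  · exact hnq (keyB n D a i (qOf_atom n X₁ D a h1 hi1) (qOf_ex n X₂ D a h2 hi2))
  · exact hnq (keyB n D a i (qOf_atom n X₂ D a h2 hi1) (qOf_ex n X₁ D a h1 hi2))


/-- (a) `q_X ⊭ q` for every `X ⊆ {1,…,n}`; (b) for `X₁ ≠ X₂` there is no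
pointed instance satisfying both `q_{X₁}` and `q_{X₂}` but not `q`; hence (c)
every split partner of `{q}` in `ELI` has at least `2ⁿ` members. -/
theorem splitPartner_lower_bound (n : ℕ) :
    (∀ X : Finset (Fin n), ¬ eentails (qOf n X) (qSplit n)) ∧
    (∀ X₁ X₂ : Finset (Fin n), X₁ ≠ X₂ →
      ∀ (I : Type) (D : DInst (Fin n) Unit I) (a : I),
        ¬ (¬ esat D (qSplit n) a ∧ esat D (qOf n X₁) a ∧ esat D (qOf n X₂) a)) ∧
    (∀ S : Set (PInst (Fin n) Unit), splitPartner S {qSplit n} → S.Finite →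
      2 ^ n ≤ S.ncard) := by
  refine ⟨partA n, partB n, ?_⟩
  intro S hS hfin
  -- no member of S satisfies qSplit n
  have hnoq : ∀ p ∈ S, ¬ esat p.D (qSplit n) p.pt := by
    intro p hp hsat
    have := (hS (qSplit n)).mp ⟨p, hp, hsat⟩
    exact this (qSplit n) rfl (fun _ _ _ h => h)
  -- for each X choose a member of S satisfying qOf n X
  have hch : ∀ X : Finset (Fin n), ∃ p ∈ S, esat p.D (qOf n X) p.pt := by
    intro X
    refine (hS (qOf n X)).mpr ?_
    rintro q rfl
    exact partA n X
  choose f hfS hfsat using hch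
  have hinj : Function.Injective f := by
    intro X₁ X₂ heq
    by_contra hne
    exact partB n X₁ X₂ hne _ (f X₁).D (f X₁).pt
      ⟨hnoq _ (hfS X₁), hfsat X₁, heq ▸ hfsat X₂⟩
  haveI : Finite S := hfin
  have : Nat.card (Finset (Fin n)) ≤ Nat.card S :=
    Nat.card_le_card_of_injective (fun X => (⟨f X, hfS X⟩ : S))
      (fun X₁ X₂ h => hinj (congrArg Subtype.val h))
  simpa [Nat.card_eq_fintype_card, Nat.card_coe_set_eq] using this
end

section
/- Let σ be a finite signature and let q = ρ₀ λ₁* ρ₁ λ₂* … λₙ* ρₙ ∅* and q' = ρ₀ ρ₁ λ₂* … λₙ* ρₙ ∅* be path U-queries (in regular-expression form over 2^σ) with q not entailing q'. Then there exists a data instance of the form D = ρ₀ λ₁ ρ₁ λ₂^{k₂} … λₙ^{kₙ} ρₙ (with exactly one occurrence of λ₁) such that D ⊨ q and D ⊭ q'. -/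
/-- A path `U`-query in regular-expression form `ρ₀ λ₁* ρ₁ λ₂* … λₙ* ρₙ ∅*` is
given by `ρ₀ : Finset σ` and a list of pairs `(λᵢ, ρᵢ)`, where `λᵢ = none`
codes `⊥` (and `⊥* = ε`).  `lang ρ₀ L w` says the word `w` over `2^σ` belongs
to the language of the regular expression. -/
def lang {σ : Type} (ρ₀ : Finset σ) :
    List (Option (Finset σ) × Finset σ) → List (Finset σ) → Prop
  | [], w => ∃ k : ℕ, w = ρ₀ :: List.replicate k (∅ : Finset σ)
  | (lam, ρ) :: rest, w =>
      ∃ (k : ℕ) (w' : List (Finset σ)), lang ρ rest w' ∧ (lam = none → k = 0) ∧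
        w = ρ₀ :: (List.replicate k (lam.getD ∅) ++ w')

/-- Satisfaction: a data instance `D` satisfies the query iff some word of its
language embeds componentwise (same length, `⊆` at every position) into `D`. -/
def usat {σ : Type} (ρ₀ : Finset σ) (L : List (Option (Finset σ) × Finset σ))
    (D : List (Finset σ)) : Prop :=
  ∃ w, lang ρ₀ L w ∧ List.Forall₂ (· ⊆ ·) w D

/-- Entailment of path `U`-queries in regular-expression form. -/
def uentails {σ : Type} (ρ₀ : Finset σ) (L : List (Option (Finset σ) × Finset σ))
    (ρ₀' : Finset σ) (L' : List (Option (Finset σ) × Finset σ)) : Prop :=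
  ∀ D : List (Finset σ), usat ρ₀ L D → usat ρ₀' L' D

private lemma frefl {σ : Type} (l : List (Finset σ)) : List.Forall₂ (· ⊆ ·) l l :=
  List.forall₂_same.2 fun x _ => Finset.Subset.refl x

private lemma ftrans {σ : Type} : ∀ {a b c : List (Finset σ)},
    List.Forall₂ (· ⊆ ·) a b → List.Forall₂ (· ⊆ ·) b c → List.Forall₂ (· ⊆ ·) a c := by
  intro a b c hab
  induction hab generalizing c with
  | nil => intro h; cases h; exact List.Forall₂.nil
  | cons h₁ h₂ ih =>
    intro h; cases h with
    | cons h₃ h₄ => exact List.Forall₂.cons (h₁.trans h₃) (ih h₄)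

/-- If `q = ρ₀λ₁*ρ₁λ₂*…λₙ*ρₙ∅*` does not entail `q' = ρ₀ρ₁λ₂*…λₙ*ρₙ∅*`, then
some data instance of the form `ρ₀ λ₁ ρ₁ λ₂^{k₂} … λₙ^{kₙ} ρₙ` (with exactly one
occurrence of `λ₁`) satisfies `q` but not `q'`. -/
theorem single_lambda_separator (σ : Type) [Fintype σ] [DecidableEq σ]
    (ρ₀ ρ₁ lam₁ : Finset σ) (rest : List (Option (Finset σ) × Finset σ))
    (h : ¬ uentails ρ₀ ((some lam₁, ρ₁) :: rest) ρ₀ ((none, ρ₁) :: rest)) :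
    ∃ w' : List (Finset σ), lang ρ₁ rest w' ∧
      usat ρ₀ ((some lam₁, ρ₁) :: rest) (ρ₀ :: lam₁ :: w') ∧
      ¬ usat ρ₀ ((none, ρ₁) :: rest) (ρ₀ :: lam₁ :: w') := by
  by_contra hc
  push_neg at hc
  apply h
  intro D hD
  obtain ⟨w, hw, hwD⟩ := hD
  obtain ⟨k, z, hz, -, rfl⟩ := hw
  simp only [Option.getD_some] at hwD
  -- iterated absorption of the `λ₁`'s
  have key : ∀ j, ∃ x, lang ρ₁ rest x ∧
      List.Forall₂ (· ⊆ ·) x (List.replicate j lam₁ ++ z) := by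
    intro j
    induction j with
    | zero => exact ⟨z, hz, frefl z⟩
    | succ j ih =>
      obtain ⟨x, hx, hxz⟩ := ih
      have h1 : usat ρ₀ ((some lam₁, ρ₁) :: rest) (ρ₀ :: lam₁ :: x) :=
        ⟨ρ₀ :: lam₁ :: x, ⟨1, x, hx, by simp, by simp⟩, frefl _⟩
      obtain ⟨w', hw', he⟩ := hc x hx h1
      obtain ⟨k', x', hx', hk', rfl⟩ := hw'
      have hk0 : k' = 0 := hk' rfl
      subst hk0
      simp only [List.replicate_zero, List.nil_append] at he
      rcases he with _ | ⟨-, he'⟩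
      refine ⟨x', hx', ?_⟩
      have : List.Forall₂ (· ⊆ ·) (lam₁ :: x)
          (lam₁ :: (List.replicate j lam₁ ++ z)) :=
        List.Forall₂.cons (Finset.Subset.refl lam₁) hxz
      have := ftrans he' this
      simpa [List.replicate_succ] using this
  obtain ⟨x, hx, hxk⟩ := key k
  rcases hwD with _ | ⟨hρ, hT⟩
  exact ⟨ρ₀ :: x, ⟨0, x, hx, fun _ => rfl, by simp⟩,
    List.Forall₂.cons hρ (ftrans hxk hT)⟩
end

section
/- Let q = ρ₀λ₁*ρ₁…λₙ*ρₙ∅* and q' = ρ₀μ₁*ρ₁…μₙ*ρₙ∅* be path U-queries over finite signature σ with the same ρᵢ, and suppose q is peerless (each λᵢ is ⊥ or incomparable with ρᵢ under ⊆). If λᵢ ≠ ⊥ subsumes μ_j occurring in a matching pair (λᵢ, μ_j), then i ≥ j and μ_j = ρ_j = ρ_{j+1} = … = ρ_{i−1} = λᵢ. -/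
/-- `subsumes ρ i j li mj` : `λᵢ = li` subsumes `μⱼ = mj` (for path `U`-queries
sharing the mandatory letters `ρ`): either `i = j` and `μⱼ ⊆ λᵢ`; or `j < i` and
`μⱼ ⊆ ρⱼ ⊆ ρ_{j+1} ⊆ … ⊆ ρ_{i−1} ⊆ λᵢ`; or `j > i` and
`μⱼ ⊆ ρ_{j−1} ⊆ … ⊆ ρᵢ ⊆ λᵢ`. -/
def subsumes {σ : Type} (ρ : ℕ → Finset σ) (i j : ℕ) (li mj : Finset σ) : Prop :=
  (i = j ∧ mj ⊆ li) ∨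
  (j < i ∧ mj ⊆ ρ j ∧ (∀ l, j ≤ l → l + 1 < i → ρ l ⊆ ρ (l + 1)) ∧ ρ (i - 1) ⊆ li) ∨
  (i < j ∧ mj ⊆ ρ (j - 1) ∧ (∀ l, i < l → l < j → ρ l ⊆ ρ (l - 1)) ∧ ρ i ⊆ li)

/-- Let `q = ρ₀λ₁*ρ₁…λₙ*ρₙ∅*` and `q' = ρ₀μ₁*ρ₁…μₙ*ρₙ∅*` be path `U`-queries
over a finite signature `σ` with the same `ρᵢ`, and let `q` be peerless (each
`λᵢ` is `⊥` or `⊆`-incomparable with `ρᵢ`).  If `λᵢ ≠ ⊥` subsumes `μⱼ`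
occurring in a matching pair `(λᵢ, μⱼ)` (i.e. they subsume each other), then
`i ≥ j` and `μⱼ = ρⱼ = ρ_{j+1} = … = ρ_{i−1} = λᵢ`. -/
theorem matching_pair_of_peerless (σ : Type) [Fintype σ] (n : ℕ)
    (ρ : ℕ → Finset σ) (lam mu : ℕ → Option (Finset σ))
    (hpeer : ∀ i, 1 ≤ i → i ≤ n →
      lam i = none ∨ ∃ l, lam i = some l ∧ ¬ l ⊆ ρ i ∧ ¬ ρ i ⊆ l)
    (i j : ℕ) (hi1 : 1 ≤ i) (hin : i ≤ n) (hj1 : 1 ≤ j) (hjn : j ≤ n)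
    (li mj : Finset σ) (hli : lam i = some li) (hmj : mu j = some mj)
    (hmatch : subsumes ρ i j li mj ∧ subsumes ρ j i mj li) :
    j ≤ i ∧ mj = li ∧ ∀ l, j ≤ l → l < i → ρ l = li := by
  obtain ⟨h1, h2⟩ := hmatch
  -- peerless at i
  have hpi := hpeer i hi1 hin
  rw [hli] at hpi
  obtain ⟨l, hl, hnsub1, hnsub2⟩ := hpi.resolve_left (by simp)
  have hll : li = l := Option.some.inj hl
  rw [← hll] at hnsub1 hnsub2
  clear hll hl hpi
  rcases h1 with ⟨hij, hsub⟩ | ⟨hji, hmr, hchain, hri⟩ | ⟨hij, hmr, hchain, hri⟩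
  · -- i = j
    subst hij
    rcases h2 with ⟨_, hsub'⟩ | ⟨h, _⟩ | ⟨h, _⟩ <;> try omega
    exact ⟨le_refl i, Finset.Subset.antisymm hsub hsub', fun l h1 h2 => absurd h2 (by omega)⟩
  · -- j < i
    rcases h2 with ⟨h, _⟩ | ⟨h, _⟩ | ⟨hji', hlr, hchain', hrj⟩ <;> try omega
    -- from h2 (third case, j < i): li ⊆ ρ (i-1), chain downward, ρ j ⊆ mj
    have hmjeq : mj = ρ j := Finset.Subset.antisymm hmr hrj
    have step : ∀ l, j ≤ l → l + 1 < i → ρ l = ρ (l + 1) := by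
      intro l hjl hli'
      have h1 := hchain l hjl hli'
      have h2 := hchain' (l + 1) (by omega) (by omega)
      simp at h2
      exact Finset.Subset.antisymm h1 h2
    have main : ∀ l, j ≤ l → l < i → ρ j = ρ l := by
      intro l hjl
      induction l, hjl using Nat.le_induction with
      | base => intro _; rfl
      | succ k hk ih =>
        intro hki
        rw [ih (by omega), step k hk (by omega)]
    have hlieq : ρ (i - 1) = li := Finset.Subset.antisymm hri hlr
    have hjli : ρ j = li := by
      rw [main (i - 1) (by omega) (by omega), hlieq]
    refine ⟨le_of_lt hji, by rw [hmjeq, hjli], fun l h1 h2 => by rw [← main l h1 h2, hjli]⟩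
  · -- i < j : contradiction via peerless
    rcases h2 with ⟨h, _⟩ | ⟨hji', hlr, hchain', hrj⟩ | ⟨h, _⟩ <;> try omega
    exact absurd hri hnsub2
end

section
/- Over the signature σ = {A,B,X}, the queries q = XA*q₂q₃X∅* and q' = X⊥*q₂q₃X∅* where q_l = (AB*)^{l−1}AA*BB*, are not equivalent: the data instance XAABAAABAAABX satisfies q at position 0 but does not satisfy q'. -/
/-- Singleton letters over `σ = {A, B, X}` encoded as `Fin 3`:
`A = {0}`, `B = {1}`, `X = {2}`. -/
def sA : Finset (Fin 3) := {0}
def sB : Finset (Fin 3) := {1}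
def sX : Finset (Fin 3) := {2}

/-- The query `q = X A* q₂ q₃ X ∅*` with `q_l = (AB*)^{l−1}AA*BB*`, i.e. the
regular expression `X A* A B* A A* B B* A B* A B* A A* B B* X ∅*`, as the list
of pairs `(λᵢ, ρᵢ)` following `ρ₀ = X`. -/
def L₁ : List (Option (Finset (Fin 3)) × Finset (Fin 3)) :=
  [(some sA, sA), (some sB, sA), (some sA, sB), (some sB, sA),
   (some sB, sA), (some sB, sA), (some sA, sB), (some sB, sX)]

/-- The query `q' = X ⊥* q₂ q₃ X ∅*`, i.e. `q` with `A*` replaced by `⊥*`. -/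
def L₂ : List (Option (Finset (Fin 3)) × Finset (Fin 3)) :=
  [(none, sA), (some sB, sA), (some sA, sB), (some sB, sA),
   (some sB, sA), (some sB, sA), (some sA, sB), (some sB, sX)]

/-- The data instance `XAABAAABAAABX`. -/
def D19 : List (Finset (Fin 3)) :=
  [sX, sA, sA, sB, sA, sA, sA, sB, sA, sA, sA, sB, sX]

lemma peel (b d : Finset (Fin 3)) (h : ¬ b ⊆ d) (k : ℕ) (w D : List (Finset (Fin 3)))
    (hf : List.Forall₂ (· ⊆ ·) (List.replicate k b ++ w) (d :: D)) :
    List.Forall₂ (· ⊆ ·) w (d :: D) := by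
  cases k with
  | zero => simpa using hf
  | succ n =>
      rw [List.replicate_succ, List.cons_append, List.forall₂_cons] at hf
      exact absurd hf.1 h

lemma pos_part : usat sX L₁ D19 := by
  refine ⟨D19, ?_, ?_⟩
  · show lang sX L₁ D19
    exact ⟨1, [sA,sB,sA,sA,sA,sB,sA,sA,sA,sB,sX],
      ⟨1, [sA,sA,sA,sB,sA,sA,sA,sB,sX],
        ⟨2, [sB,sA,sA,sA,sB,sX],
          ⟨0, [sA,sA,sA,sB,sX],
            ⟨0, [sA,sA,sB,sX],
              ⟨0, [sA,sB,sX],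
                ⟨0, [sB,sX],
                  ⟨0, [sX], ⟨0, rfl⟩, nofun, rfl⟩,
                  nofun, rfl⟩,
                nofun, rfl⟩,
              nofun, rfl⟩,
            nofun, rfl⟩,
          nofun, rfl⟩,
        nofun, rfl⟩,
      nofun, rfl⟩
  · simp [D19, List.forall₂_same]

lemma neg_part : ¬ usat sX L₂ D19 := by
  rintro ⟨w, hl, hf⟩
  rw [show L₂ = [(none, sA), (some sB, sA), (some sA, sB), (some sB, sA),
     (some sB, sA), (some sB, sA), (some sA, sB), (some sB, sX)] from rfl] at hl
  obtain ⟨k1, w1, ⟨k2, w2, ⟨k3, w3, ⟨k4, w4, ⟨k5, w5, ⟨k6, w6, ⟨k7, w7, ⟨k8, w8,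
    ⟨k9, rfl⟩, -, rfl⟩, -, rfl⟩, -, rfl⟩, -, rfl⟩, -, rfl⟩, -, rfl⟩, -, rfl⟩, hk1, rfl⟩ := hl
  obtain rfl := hk1 rfl
  rw [show D19 = [sX, sA, sA, sB, sA, sA, sA, sB, sA, sA, sA, sB, sX] from rfl] at hf
  simp only [Option.getD, List.replicate_zero, List.nil_append, List.forall₂_cons] at hf
  obtain ⟨-, -, hf⟩ := hf
  replace hf := peel sB sA (by decide) k2 _ _ hf
  rw [List.forall₂_cons] at hf
  obtain ⟨-, hf⟩ := hf
  replace hf := peel sA sB (by decide) k3 _ _ hf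
  rw [List.forall₂_cons] at hf
  obtain ⟨-, hf⟩ := hf
  replace hf := peel sB sA (by decide) k4 _ _ hf
  rw [List.forall₂_cons] at hf
  obtain ⟨-, hf⟩ := hf
  replace hf := peel sB sA (by decide) k5 _ _ hf
  rw [List.forall₂_cons] at hf
  obtain ⟨-, hf⟩ := hf
  replace hf := peel sB sA (by decide) k6 _ _ hf
  rw [List.forall₂_cons] at hf
  obtain ⟨-, hf⟩ := hf
  replace hf := peel sA sB (by decide) k7 _ _ hf
  rw [List.forall₂_cons] at hf
  obtain ⟨-, hf⟩ := hf
  replace hf := peel sB sA (by decide) k8 _ _ hf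
  rw [List.forall₂_cons] at hf
  exact absurd hf.1 (by decide)

/-- `q = XA*q₂q₃X∅*` and `q' = X⊥*q₂q₃X∅*` are not equivalent: the data
instance `XAABAAABAAABX` satisfies `q` at position `0` but not `q'`. -/
theorem XA_not_equiv_Xbot :
    usat sX L₁ D19 ∧ ¬ usat sX L₂ D19 ∧
    ¬ (∀ D : List (Finset (Fin 3)), usat sX L₁ D ↔ usat sX L₂ D) := by
  refine ⟨pos_part, neg_part, fun h => neg_part ((h D19).mp pos_part)⟩
end
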